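/- Let m₀ ∈ ℕ, let (z_m)_{m>m₀} be complex numbers with z_m ≠ 1 for all m and sup_m 4^m·|z_m| < ∞, and let (β_m)_{m>m₀} be real numbers with 4^m·β_m → 0. Let f_{m₀} : V_{m₀} → ℂ be any function, and for m > m₀ define f_m : V_m → ℂ by: f_m = f_{m−1} on V_{m−1}, and for each edge {y₁, y₂} of G_{m−1} replaced in G_m by the scale-m cell y₁–u–y₂–v–y₁, f_m(u) = (exp(iβ_m)·f_{m−1}(y₁) + exp(−iβ_m)·f_{m−1}(y₂))/(2(1−z_m)) and f_m(v) = (exp(−iβ_m)·f_{m−1}(y₁) + exp(iβ_m)·f_{m−1}(y₂))/(2(1−z_m)). Then sup_m sup_{x∈V_m} |f_m(x)| < ∞, and there is a constant C such that for every m > m₀ and every edge {x,y} of G_m, |f_m(x) − f_m(y)| ≤ C·2^{−m}. -/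

import Mathlib

open Complex

abbrev DEdge (m : ℕ) : Type := Fin m → Fin 4

def DVtx : ℕ → Type
  | 0 => Bool
  | m + 1 => DVtx m ⊕ (DEdge m × Bool)

instance DVtx.instFintype : (m : ℕ) → Fintype (DVtx m)
  | 0 => inferInstanceAs (Fintype Bool)
  | m + 1 =>
      letI := DVtx.instFintype m
      inferInstanceAs (Fintype (DVtx m ⊕ (DEdge m × Bool)))

instance DVtx.instDecidableEq : (m : ℕ) → DecidableEq (DVtx m)
  | 0 => inferInstanceAs (DecidableEq Bool)
  | m + 1 =>
      letI := DVtx.instDecidableEq m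
      inferInstanceAs (DecidableEq (DVtx m ⊕ (DEdge m × Bool)))

/-- The inclusion of scale-`m` vertices into scale-`m+1` vertices. -/
def oldV {m : ℕ} (x : DVtx m) : DVtx (m + 1) := Sum.inl x

/-- The new vertices at scale `m+1`: each scale-`m` edge gives two new vertices. -/
def newV {m : ℕ} (p : DEdge m × Bool) : DVtx (m + 1) := Sum.inr p

/-- Endpoints (source, target) of each canonically directed edge. Each edge `w` of `G_m`
with endpoints `x = src w`, `y = tgt w` is replaced in `G_{m+1}` by the 4-cycle
`x–u–y–v–x` with `u = (w,false)`, `v = (w,true)`, its four edges directed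
`x→u`, `u→y`, `y→v`, `v→x`. -/
def dEnds : (m : ℕ) → DEdge m → DVtx m × DVtx m
  | 0, _ => (false, true)
  | m + 1, w =>
      let p : DEdge m := fun i => w i.castSucc
      let x := (dEnds m p).1
      let y := (dEnds m p).2
      if w (Fin.last m) = 0 then (oldV x, newV (p, false))
      else if w (Fin.last m) = 1 then (newV (p, false), oldV y)
      else if w (Fin.last m) = 2 then (oldV y, newV (p, true))
      else (newV (p, true), oldV x)

def dsrc (m : ℕ) (e : DEdge m) : DVtx m := (dEnds m e).1
def dtgt (m : ℕ) (e : DEdge m) : DVtx m := (dEnds m e).2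

/-- Degree of a vertex in `G_m`. -/
def ddeg (m : ℕ) (x : DVtx m) : ℕ :=
  (Finset.univ.filter fun e : DEdge m => dsrc m e = x).card +
  (Finset.univ.filter fun e : DEdge m => dtgt m e = x).card

/-- The magnetic operator `M^a_m` associated to a 1-form `a` (recorded on the canonical
orientations of the edges; the reversed edge carries `-a e`). -/
noncomputable def magOp (m : ℕ) (a : DEdge m → ℝ) (f : DVtx m → ℂ) (x : DVtx m) : ℂ :=
  (ddeg m x : ℂ)⁻¹ *
    ((∑ e : DEdge m, if dsrc m e = x then f x - Complex.exp (Complex.I * a e) * f (dtgt m e) else 0) +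
     (∑ e : DEdge m, if dtgt m e = x then f x - Complex.exp (-(Complex.I * a e)) * f (dsrc m e) else 0))

/-- The two original vertices `V_0` viewed inside `V_m`. -/
def base : (m : ℕ) → Bool → DVtx m
  | 0, b => b
  | m + 1, b => oldV (base m b)

/-- Matrix of the magnetic operator `M^a_m`. -/
noncomputable def magMat (m : ℕ) (a : DEdge m → ℝ) : Matrix (DVtx m) (DVtx m) ℂ :=
  Matrix.of fun x y => magOp m a (fun v => if v = y then 1 else 0) x

/-- The Dirichlet magnetic operator: submatrix indexed by `V_m \ V_0`. -/
noncomputable def dirMat (m : ℕ) (a : DEdge m → ℝ) :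
    Matrix {x : DVtx m // ∀ b, x ≠ base m b} {x : DVtx m // ∀ b, x ≠ base m b} ℂ :=
  (magMat m a).submatrix Subtype.val Subtype.val

/-- Flux of a 1-form around the scale-`(m+1)` cell replacing edge `w` of `G_m`. -/
noncomputable def cellFlux {m : ℕ} (a : DEdge (m + 1) → ℝ) (w : DEdge m) : ℝ :=
  a (Fin.snoc w 0) + a (Fin.snoc w 1) + a (Fin.snoc w 2) + a (Fin.snoc w 3)

/-- The trace of a 1-form on `G_{m+1}` to `G_m`:
`a'(e_{xy}) = (1/2)(a(e_{xu}) + a(e_{uy}) + a(e_{xv}) + a(e_{vy}))`. -/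
noncomputable def traceForm {m : ℕ} (a : DEdge (m + 1) → ℝ) : DEdge m → ℝ :=
  fun w => (1 / 2) * (a (Fin.snoc w 0) + a (Fin.snoc w 1) - a (Fin.snoc w 2) - a (Fin.snoc w 3))

/-- A compatible family of 1-forms: flux `±4β_m` through every scale-`m` cell, and each
form traces to the previous one. -/
def Compatible (βs : ℕ → ℝ) (a : (m : ℕ) → DEdge m → ℝ) : Prop :=
  ∀ (k : ℕ) (w : DEdge k),
    (cellFlux (a (k + 1)) w = 4 * βs (k + 1) ∨ cellFlux (a (k + 1)) w = -(4 * βs (k + 1))) ∧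
    traceForm (a (k + 1)) w = a k w


noncomputable def Complex.abs : AbsoluteValue ℂ ℝ where
  toFun x := ‖x‖
  map_mul' := norm_mul
  nonneg' := norm_nonneg
  eq_zero' _ := norm_eq_zero
  add_le' := norm_add_le

@[simp] lemma Complex.abs_apply' (x : ℂ) : Complex.abs x = ‖x‖ := rfl

lemma Complex.abs_two : Complex.abs 2 = 2 := Complex.norm_two

lemma L0 (t : ℝ) (ht : |t| ≤ 1) (q : ℂ) :
    Complex.abs (2⁻¹ - Complex.exp (Complex.I * t) * q) ≤ |t| + Complex.abs (q - 2⁻¹) := by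
  have h1 : (2⁻¹ : ℂ) - Complex.exp (Complex.I * t) * q
      = (Complex.exp (Complex.I * t) - 1) * (-2⁻¹) + Complex.exp (Complex.I * t) * (2⁻¹ - q) := by
    ring
  have habsI : Complex.abs (Complex.I * t) = |t| := by
    simp
  have he : Complex.abs (Complex.exp (Complex.I * t) - 1) ≤ 2 * |t| := by
    have : Complex.abs (Complex.exp (Complex.I * t) - 1) ≤ 2 * Complex.abs (Complex.I * t) :=
      Complex.norm_exp_sub_one_le (x := Complex.I * t) (by simpa using ht)
    rwa [habsI] at this
  have hexp : Complex.abs (Complex.exp (Complex.I * t)) = 1 := by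
    simp [Complex.norm_exp]
  rw [h1]
  calc Complex.abs _ ≤ Complex.abs ((Complex.exp (Complex.I * t) - 1) * (-2⁻¹)) +
        Complex.abs (Complex.exp (Complex.I * t) * (2⁻¹ - q)) := Complex.abs.add_le _ _
    _ ≤ |t| + Complex.abs (q - 2⁻¹) := by
        rw [map_mul, map_mul, hexp, one_mul, AbsoluteValue.map_sub Complex.abs (2⁻¹ : ℂ) q]
        have : Complex.abs (-2⁻¹ : ℂ) = 2⁻¹ := by
          rw [map_neg_eq_map]
          simp
        rw [this]
        nlinarith [Complex.abs.nonneg (Complex.exp (Complex.I * t) - 1)]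

lemma Lneg (t : ℝ) : Complex.exp (-(Complex.I * t)) = Complex.exp (Complex.I * ((-t : ℝ) : ℂ)) := by
  push_cast; ring_nf

lemma L1 (A B q : ℂ) (t : ℝ) (ht : |t| ≤ 1) :
    Complex.abs (A - (Complex.exp (Complex.I * t) * A + Complex.exp (-(Complex.I * t)) * B) * q)
      ≤ Complex.abs (A - B) / 2 +
        (|t| + Complex.abs (q - 2⁻¹)) * (Complex.abs A + Complex.abs B) := by
  have hrw : A - (Complex.exp (Complex.I * t) * A + Complex.exp (-(Complex.I * t)) * B) * q
      = (A - B) * 2⁻¹ + ((2⁻¹ - Complex.exp (Complex.I * t) * q) * A +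
          (2⁻¹ - Complex.exp (Complex.I * ((-t : ℝ) : ℂ)) * q) * B) := by
    rw [← Lneg]; ring
  rw [hrw]
  have h1 := L0 t ht q
  have h2 := L0 (-t) (by rwa [abs_neg]) q
  rw [abs_neg] at h2
  have hA := Complex.abs.nonneg A
  have hB := Complex.abs.nonneg B
  calc Complex.abs _ ≤ Complex.abs ((A - B) * 2⁻¹) +
        Complex.abs ((2⁻¹ - Complex.exp (Complex.I * t) * q) * A +
          (2⁻¹ - Complex.exp (Complex.I * ((-t : ℝ) : ℂ)) * q) * B) := Complex.abs.add_le _ _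
    _ ≤ Complex.abs ((A - B) * 2⁻¹) +
        (Complex.abs ((2⁻¹ - Complex.exp (Complex.I * t) * q) * A) +
         Complex.abs ((2⁻¹ - Complex.exp (Complex.I * ((-t : ℝ) : ℂ)) * q) * B)) := by
        gcongr; exact Complex.abs.add_le _ _
    _ ≤ Complex.abs (A - B) / 2 + (|t| + Complex.abs (q - 2⁻¹)) * (Complex.abs A + Complex.abs B) := by
        rw [map_mul, map_mul, map_mul]
        have : Complex.abs (2⁻¹ : ℂ) = 2⁻¹ := by simp
        rw [this]
        nlinarith [Complex.abs.nonneg (2⁻¹ - Complex.exp (Complex.I * t) * q),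
          Complex.abs.nonneg (2⁻¹ - Complex.exp (Complex.I * ((-t : ℝ) : ℂ)) * q)]

lemma Lneg2 (t : ℝ) : Complex.exp (-(Complex.I * ((-t : ℝ) : ℂ))) = Complex.exp (Complex.I * t) := by
  push_cast; ring_nf

-- u -> y edge
lemma L1b (A B q : ℂ) (t : ℝ) (ht : |t| ≤ 1) :
    Complex.abs ((Complex.exp (Complex.I * t) * A + Complex.exp (-(Complex.I * t)) * B) * q - B)
      ≤ Complex.abs (A - B) / 2 +
        (|t| + Complex.abs (q - 2⁻¹)) * (Complex.abs A + Complex.abs B) := by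
  have h := L1 B A q (-t) (by rwa [abs_neg])
  rw [← Lneg, Lneg2] at h
  rw [AbsoluteValue.map_sub Complex.abs]
  have e1 : B - (Complex.exp (Complex.I * t) * A + Complex.exp (-(Complex.I * t)) * B) * q
      = B - (Complex.exp (-(Complex.I * ↑t)) * B + Complex.exp (Complex.I * ↑t) * A) * q := by ring
  rw [e1]
  rw [AbsoluteValue.map_sub Complex.abs B A, abs_neg, add_comm (Complex.abs B)] at h
  exact h

-- y -> v edge
lemma L1c (A B q : ℂ) (t : ℝ) (ht : |t| ≤ 1) :
    Complex.abs (B - (Complex.exp (-(Complex.I * t)) * A + Complex.exp (Complex.I * t) * B) * q)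
      ≤ Complex.abs (A - B) / 2 +
        (|t| + Complex.abs (q - 2⁻¹)) * (Complex.abs A + Complex.abs B) := by
  have h := L1 B A q t ht
  have e1 : B - (Complex.exp (-(Complex.I * t)) * A + Complex.exp (Complex.I * t) * B) * q
      = B - (Complex.exp (Complex.I * ↑t) * B + Complex.exp (-(Complex.I * ↑t)) * A) * q := by ring
  rw [e1]
  rw [AbsoluteValue.map_sub Complex.abs B A, add_comm (Complex.abs B)] at h
  exact h

-- v -> x edge
lemma L1d (A B q : ℂ) (t : ℝ) (ht : |t| ≤ 1) :
    Complex.abs ((Complex.exp (-(Complex.I * t)) * A + Complex.exp (Complex.I * t) * B) * q - A)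
      ≤ Complex.abs (A - B) / 2 +
        (|t| + Complex.abs (q - 2⁻¹)) * (Complex.abs A + Complex.abs B) := by
  have h := L1 A B q (-t) (by rwa [abs_neg])
  rw [← Lneg, Lneg2, abs_neg] at h
  rw [AbsoluteValue.map_sub Complex.abs]
  exact h
lemma keyStep (m₀ : ℕ) (z : ℕ → ℂ) (β : ℕ → ℝ) (f : (m : ℕ) → DVtx m → ℂ)
    (hold : ∀ k, m₀ ≤ k → ∀ x : DVtx k, f (k + 1) (oldV x) = f k x)
    (hu : ∀ k, m₀ ≤ k → ∀ w : DEdge k,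
        f (k + 1) (newV (w, false)) =
          (Complex.exp (Complex.I * β (k + 1)) * f k (dsrc k w) +
              Complex.exp (-(Complex.I * β (k + 1))) * f k (dtgt k w)) /
            (2 * (1 - z (k + 1))))
    (hv : ∀ k, m₀ ≤ k → ∀ w : DEdge k,
        f (k + 1) (newV (w, true)) =
          (Complex.exp (-(Complex.I * β (k + 1))) * f k (dsrc k w) +
              Complex.exp (Complex.I * β (k + 1)) * f k (dtgt k w)) /
            (2 * (1 - z (k + 1))))
    (k : ℕ) (hk : m₀ ≤ k) (ht : |β (k + 1)| ≤ 1)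
    (D M : ℝ)
    (hD : ∀ w : DEdge k, Complex.abs (f k (dsrc k w) - f k (dtgt k w)) ≤ D)
    (hM : ∀ x : DVtx k, Complex.abs (f k x) ≤ M)
    (e : DEdge (k + 1)) :
    Complex.abs (f (k + 1) (dsrc (k + 1) e) - f (k + 1) (dtgt (k + 1) e))
      ≤ D / 2 + (|β (k + 1)| + Complex.abs ((2 * (1 - z (k + 1)))⁻¹ - 2⁻¹)) * (2 * M) := by
  have hE : dEnds (k + 1) e =
      (if e (Fin.last k) = 0 then
        (oldV (dEnds k (fun i => e i.castSucc)).1, newV ((fun i => e i.castSucc), false))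
      else if e (Fin.last k) = 1 then
        (newV ((fun i => e i.castSucc), false), oldV (dEnds k (fun i => e i.castSucc)).2)
      else if e (Fin.last k) = 2 then
        (oldV (dEnds k (fun i => e i.castSucc)).2, newV ((fun i => e i.castSucc), true))
      else (newV ((fun i => e i.castSucc), true), oldV (dEnds k (fun i => e i.castSucc)).1)) := rfl
  have hAB := hD (fun i => e i.castSucc)
  have hA := hM (dsrc k (fun i => e i.castSucc))
  have hB := hM (dtgt k (fun i => e i.castSucc))
  have hr : (0:ℝ) ≤ |β (k + 1)| + Complex.abs ((2 * (1 - z (k + 1)))⁻¹ - 2⁻¹) := by positivity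
  have habs : Complex.abs (f k (dsrc k (fun i => e i.castSucc))) +
      Complex.abs (f k (dtgt k (fun i => e i.castSucc))) ≤ 2 * M := by linarith
  have hfin : ∀ X : ℝ, X ≤ Complex.abs (f k (dsrc k (fun i => e i.castSucc)) -
        f k (dtgt k (fun i => e i.castSucc))) / 2 +
        (|β (k + 1)| + Complex.abs ((2 * (1 - z (k + 1)))⁻¹ - 2⁻¹)) *
          (Complex.abs (f k (dsrc k (fun i => e i.castSucc))) +
           Complex.abs (f k (dtgt k (fun i => e i.castSucc)))) →
      X ≤ D / 2 + (|β (k + 1)| + Complex.abs ((2 * (1 - z (k + 1)))⁻¹ - 2⁻¹)) * (2 * M) := by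
    intro X hX
    refine hX.trans (add_le_add (by linarith) (mul_le_mul_of_nonneg_left habs hr))
  by_cases h0 : e (Fin.last k) = 0
  · simp only [dsrc, dtgt, hE, if_pos h0]
    rw [hold k hk, hu k hk, div_eq_mul_inv]
    exact hfin _ (L1 _ _ _ _ ht)
  by_cases h1 : e (Fin.last k) = 1
  · simp only [dsrc, dtgt, hE, if_neg h0, if_pos h1]
    rw [hold k hk, hu k hk, div_eq_mul_inv]
    exact hfin _ (L1b _ _ _ _ ht)
  by_cases h2 : e (Fin.last k) = 2
  · simp only [dsrc, dtgt, hE, if_neg h0, if_neg h1, if_pos h2]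
    rw [hold k hk, hv k hk, div_eq_mul_inv]
    exact hfin _ (L1c _ _ _ _ ht)
  · simp only [dsrc, dtgt, hE, if_neg h0, if_neg h1, if_neg h2]
    rw [hold k hk, hv k hk, div_eq_mul_inv]
    exact hfin _ (L1d _ _ _ _ ht)

noncomputable def Mv (f : (m : ℕ) → DVtx m → ℂ) (m : ℕ) : ℝ :=
  Finset.univ.sup' ⟨base m false, Finset.mem_univ _⟩ fun x => Complex.abs (f m x)

noncomputable def Dv (f : (m : ℕ) → DVtx m → ℂ) (m : ℕ) : ℝ :=
  Finset.univ.sup' ⟨fun _ => 0, Finset.mem_univ _⟩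
    fun e : DEdge m => Complex.abs (f m (dsrc m e) - f m (dtgt m e))

lemma Mv_le (f : (m : ℕ) → DVtx m → ℂ) (m : ℕ) (x : DVtx m) :
    Complex.abs (f m x) ≤ Mv f m := by
  exact Finset.le_sup' (fun x => Complex.abs (f m x)) (Finset.mem_univ x)

lemma Mv_nonneg (f : (m : ℕ) → DVtx m → ℂ) (m : ℕ) : 0 ≤ Mv f m :=
  (Complex.abs.nonneg _).trans (Mv_le f m (base m false))

lemma Dv_le (f : (m : ℕ) → DVtx m → ℂ) (m : ℕ) (e : DEdge m) :
    Complex.abs (f m (dsrc m e) - f m (dtgt m e)) ≤ Dv f m := by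
  exact Finset.le_sup' (fun e : DEdge m => Complex.abs (f m (dsrc m e) - f m (dtgt m e))) (Finset.mem_univ e)

lemma MvStep (m₀ : ℕ) (z : ℕ → ℂ) (β : ℕ → ℝ) (f : (m : ℕ) → DVtx m → ℂ)
    (hold : ∀ k, m₀ ≤ k → ∀ x : DVtx k, f (k + 1) (oldV x) = f k x)
    (hu : ∀ k, m₀ ≤ k → ∀ w : DEdge k,
        f (k + 1) (newV (w, false)) =
          (Complex.exp (Complex.I * β (k + 1)) * f k (dsrc k w) +
              Complex.exp (-(Complex.I * β (k + 1))) * f k (dtgt k w)) /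
            (2 * (1 - z (k + 1))))
    (hv : ∀ k, m₀ ≤ k → ∀ w : DEdge k,
        f (k + 1) (newV (w, true)) =
          (Complex.exp (-(Complex.I * β (k + 1))) * f k (dsrc k w) +
              Complex.exp (Complex.I * β (k + 1)) * f k (dtgt k w)) /
            (2 * (1 - z (k + 1))))
    (k : ℕ) (hk : m₀ ≤ k) :
    Mv f (k + 1) ≤ Mv f k * max 1 (2 * Complex.abs ((2 * (1 - z (k + 1)))⁻¹)) := by
  apply Finset.sup'_le
  intro x _
  have h0 : 0 ≤ Mv f k := Mv_nonneg f k
  have key : ∀ X Y : ℂ, Complex.abs X = 1 → Complex.abs Y = 1 → ∀ w : DEdge k,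
      Complex.abs ((X * f k (dsrc k w) + Y * f k (dtgt k w)) / (2 * (1 - z (k + 1))))
        ≤ Mv f k * max 1 (2 * Complex.abs ((2 * (1 - z (k + 1)))⁻¹)) := by
    intro X Y hX hY w
    rw [div_eq_mul_inv, map_mul]
    calc Complex.abs (X * f k (dsrc k w) + Y * f k (dtgt k w)) *
          Complex.abs ((2 * (1 - z (k + 1)))⁻¹)
        ≤ (Mv f k + Mv f k) * Complex.abs ((2 * (1 - z (k + 1)))⁻¹) := by
          apply mul_le_mul_of_nonneg_right _ (Complex.abs.nonneg _)
          calc Complex.abs (X * f k (dsrc k w) + Y * f k (dtgt k w))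
              ≤ Complex.abs (X * f k (dsrc k w)) + Complex.abs (Y * f k (dtgt k w)) :=
                Complex.abs.add_le _ _
            _ ≤ Mv f k + Mv f k := by
                rw [map_mul, map_mul, hX, hY, one_mul, one_mul]
                exact add_le_add (Mv_le f k _) (Mv_le f k _)
      _ = Mv f k * (2 * Complex.abs ((2 * (1 - z (k + 1)))⁻¹)) := by ring
      _ ≤ Mv f k * max 1 _ := mul_le_mul_of_nonneg_left (le_max_right _ _) h0
  match x with
  | Sum.inl a =>
    rw [show (Sum.inl a : DVtx (k + 1)) = oldV a from rfl, hold k hk]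
    calc Complex.abs (f k a) ≤ Mv f k := Mv_le f k a
      _ ≤ _ := le_mul_of_one_le_right h0 (le_max_left _ _)
  | Sum.inr (w, false) =>
    rw [show (Sum.inr (w, false) : DVtx (k + 1)) = newV (w, false) from rfl, hu k hk]
    exact key _ _ (by simp [Complex.norm_exp]) (by simp [Complex.norm_exp]) w
  | Sum.inr (w, true) =>
    rw [show (Sum.inr (w, true) : DVtx (k + 1)) = newV (w, true) from rfl, hv k hk]
    exact key _ _ (by simp [Complex.norm_exp]) (by simp [Complex.norm_exp]) w

/-- Spectral-decimation eigenfunction extensions are uniformly bounded and have edge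
differences of order `2^{−m}`: given `z_m ≠ 1` with `sup_m 4^m|z_m| < ∞` and `4^m β_m → 0`,
the functions `f_m` built from `f_{m₀}` by the cell-local extension rule
`f_m(u) = (e^{iβ_m}f_{m−1}(y₁) + e^{−iβ_m}f_{m−1}(y₂))/(2(1−z_m))`,
`f_m(v) = (e^{−iβ_m}f_{m−1}(y₁) + e^{iβ_m}f_{m−1}(y₂))/(2(1−z_m))` are uniformly bounded
and satisfy `|f_m(x) − f_m(y)| ≤ C·2^{−m}` across every edge of `G_m`. -/
theorem stmt16 (m₀ : ℕ) (z : ℕ → ℂ) (β : ℕ → ℝ)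
    (hz1 : ∀ m, m₀ < m → z m ≠ 1)
    (hzbd : ∃ K : ℝ, ∀ m, m₀ < m → (4 : ℝ) ^ m * ‖z m‖ ≤ K)
    (hβ : Filter.Tendsto (fun m => (4 : ℝ) ^ m * β m) Filter.atTop (nhds 0))
    (f : (m : ℕ) → DVtx m → ℂ)
    (hold : ∀ k, m₀ ≤ k → ∀ x : DVtx k, f (k + 1) (oldV x) = f k x)
    (hu : ∀ k, m₀ ≤ k → ∀ w : DEdge k,
        f (k + 1) (newV (w, false)) =
          (Complex.exp (Complex.I * β (k + 1)) * f k (dsrc k w) +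
              Complex.exp (-(Complex.I * β (k + 1))) * f k (dtgt k w)) /
            (2 * (1 - z (k + 1))))
    (hv : ∀ k, m₀ ≤ k → ∀ w : DEdge k,
        f (k + 1) (newV (w, true)) =
          (Complex.exp (-(Complex.I * β (k + 1))) * f k (dsrc k w) +
              Complex.exp (Complex.I * β (k + 1)) * f k (dtgt k w)) /
            (2 * (1 - z (k + 1)))) :
    (∃ B : ℝ, ∀ m, m₀ ≤ m → ∀ x : DVtx m, ‖f m x‖ ≤ B) ∧
    (∃ C : ℝ, ∀ m, m₀ < m → ∀ e : DEdge m,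
        ‖f m (dsrc m e) - f m (dtgt m e)‖ ≤ C * ((2 : ℝ) ^ m)⁻¹) := by
    classical
  obtain ⟨K, hK⟩ := hzbd
  replace hK : ∀ m, m₀ < m → (4 : ℝ) ^ m * Complex.abs (z m) ≤ K := hK
  have hK0 : 0 ≤ K := le_trans (by positivity) (hK (m₀ + 1) (Nat.lt_succ_self m₀))
  obtain ⟨N₁, hN₁⟩ := Metric.tendsto_atTop.mp hβ 1 one_pos
  obtain ⟨N₂, hN₂⟩ := pow_unbounded_of_one_lt (4 * K) (by norm_num : (1:ℝ) < 4)
  set N := max (max N₁ N₂) (m₀ + 1) with hNdef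
  have hNm₀ : m₀ + 1 ≤ N := le_max_right _ _
  have hNm₀' : m₀ ≤ N := le_trans (Nat.le_succ m₀) hNm₀
  -- basic facts for m ≥ N
  have hfact : ∀ m, N ≤ m → |β m| ≤ ((4:ℝ) ^ m)⁻¹ ∧
      Complex.abs ((2 * (1 - z m))⁻¹ - 2⁻¹) ≤ K * ((4:ℝ) ^ m)⁻¹ ∧
      2 * Complex.abs ((2 * (1 - z m))⁻¹) ≤ 1 + 2 * (K * ((4:ℝ) ^ m)⁻¹) := by
    intro m hm
    have hm₀ : m₀ < m := lt_of_lt_of_le (Nat.lt_succ_self m₀) (le_trans hNm₀ hm)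
    have h4pos : (0:ℝ) < 4 ^ m := by positivity
    have hzb : Complex.abs (z m) ≤ K * ((4:ℝ) ^ m)⁻¹ := by
      rw [← div_eq_mul_inv, le_div_iff₀ h4pos]
      have := hK m hm₀
      linarith [this]
    have h4N : (4:ℝ) ^ N₂ ≤ 4 ^ m :=
      pow_le_pow_right₀ (by norm_num) (le_trans (le_trans (le_max_right _ _) (le_max_left _ _)) hm)
    have hz4 : Complex.abs (z m) ≤ 4⁻¹ := by
      have h1 : K * ((4:ℝ) ^ m)⁻¹ ≤ 4⁻¹ := by
        rw [← div_eq_mul_inv, div_le_iff₀ h4pos]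
        nlinarith
      linarith
    have hζ : z m ≠ 1 := hz1 m hm₀
    have h1z : (1:ℂ) - z m ≠ 0 := sub_ne_zero.mpr (Ne.symm hζ)
    have habs1z' : 1 - Complex.abs (z m) ≤ Complex.abs (1 - z m) := by
      have := norm_sub_norm_le (1:ℂ) (z m)
      simpa using this
    have hpos : (0:ℝ) < Complex.abs (1 - z m) := by linarith
    refine ⟨?_, ?_, ?_⟩
    · have h := hN₁ m (le_trans (le_trans (le_max_left _ _) (le_max_left _ _)) hm)
      rw [Real.dist_0_eq_abs, abs_mul, abs_of_pos h4pos] at h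
      rw [show ((4:ℝ) ^ m)⁻¹ = 1 / 4 ^ m by ring, le_div_iff₀ h4pos]
      nlinarith [abs_nonneg (β m)]
    · have heq : (2 * (1 - z m))⁻¹ - 2⁻¹ = z m * (2 * (1 - z m))⁻¹ := by
        field_simp
        ring
      rw [heq, map_mul]
      have hq1 : Complex.abs ((2 * (1 - z m))⁻¹) ≤ 1 := by
        rw [map_inv₀, map_mul, Complex.abs_two]
        have h32 : (1:ℝ) ≤ 2 * Complex.abs (1 - z m) := by linarith
        have := inv_le_one_of_one_le₀ h32
        simpa using this
      calc Complex.abs (z m) * Complex.abs ((2 * (1 - z m))⁻¹)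
          ≤ (K * ((4:ℝ) ^ m)⁻¹) * 1 :=
            mul_le_mul hzb hq1 (Complex.abs.nonneg _) (by positivity)
        _ = K * ((4:ℝ) ^ m)⁻¹ := by ring
    · have heq2 : 2 * Complex.abs ((2 * (1 - z m))⁻¹) = (Complex.abs (1 - z m))⁻¹ := by
        rw [map_inv₀, map_mul, Complex.abs_two]
        field_simp
      rw [heq2]
      have h1 : (Complex.abs (1 - z m))⁻¹ ≤ 1 + 2 * Complex.abs (z m) := by
        rw [show (Complex.abs (1 - z m))⁻¹ = 1 / Complex.abs (1 - z m) by ring,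
          div_le_iff₀ hpos]
        nlinarith [Complex.abs.nonneg (z m)]
      linarith
  -- uniform boundedness for m ≥ N
  have claim1 : ∀ m, N ≤ m →
      Mv f m ≤ Mv f N * Real.exp (4 * K * (((4:ℝ) ^ N)⁻¹ - ((4:ℝ) ^ m)⁻¹)) := by
    intro m hm
    induction m, hm using Nat.le_induction with
    | base => simp
    | succ n hn ih =>
      have hn₀ : m₀ ≤ n := le_trans hNm₀' hn
      have hstep := MvStep m₀ z β f hold hu hv n hn₀
      have hfn := (hfact (n + 1) (le_trans hn (Nat.le_succ n))).2.2
      have hEbd : max 1 (2 * Complex.abs ((2 * (1 - z (n + 1)))⁻¹))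
          ≤ Real.exp (2 * (K * ((4:ℝ) ^ (n + 1))⁻¹)) := by
        apply max_le
        · have := Real.add_one_le_exp (2 * (K * ((4:ℝ) ^ (n + 1))⁻¹))
          have h0 : (0:ℝ) ≤ 2 * (K * ((4:ℝ) ^ (n + 1))⁻¹) := by positivity
          linarith
        · have := Real.add_one_le_exp (2 * (K * ((4:ℝ) ^ (n + 1))⁻¹))
          linarith
      have hmono : Mv f (n + 1) ≤
          (Mv f N * Real.exp (4 * K * (((4:ℝ) ^ N)⁻¹ - ((4:ℝ) ^ n)⁻¹))) *
            Real.exp (2 * (K * ((4:ℝ) ^ (n + 1))⁻¹)) := by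
        calc Mv f (n + 1) ≤ Mv f n * max 1 (2 * Complex.abs ((2 * (1 - z (n + 1)))⁻¹)) := hstep
          _ ≤ _ := by
            exact mul_le_mul ih hEbd (le_max_of_le_left zero_le_one)
              (mul_nonneg (Mv_nonneg f N) (Real.exp_pos _).le)
      refine hmono.trans ?_
      rw [mul_assoc, ← Real.exp_add]
      apply mul_le_mul_of_nonneg_left _ (Mv_nonneg f N)
      apply Real.exp_le_exp.mpr
      have h4 : ((4:ℝ) ^ n)⁻¹ = 4 * ((4:ℝ) ^ (n + 1))⁻¹ := by
        rw [pow_succ]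
        field_simp
      rw [h4]
      have hp : (0:ℝ) ≤ ((4:ℝ) ^ (n + 1))⁻¹ := by positivity
      nlinarith
  set B : ℝ := max ((Finset.Icc m₀ N).sup' ⟨N, by simp [hNm₀']⟩ (Mv f))
      (Mv f N * Real.exp (4 * K * ((4:ℝ) ^ N)⁻¹)) with hBdef
  have hBbound : ∀ m, m₀ ≤ m → Mv f m ≤ B := by
    intro m hm
    rcases le_or_gt m N with h | h
    · exact le_trans (Finset.le_sup' (Mv f) (Finset.mem_Icc.mpr ⟨hm, h⟩)) (le_max_left _ _)
    · refine le_trans (claim1 m h.le) (le_trans ?_ (le_max_right _ _))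
      apply mul_le_mul_of_nonneg_left _ (Mv_nonneg f N)
      apply Real.exp_le_exp.mpr
      have hp : (0:ℝ) ≤ ((4:ℝ) ^ m)⁻¹ := by positivity
      nlinarith
  have hB0 : 0 ≤ B := le_trans (Mv_nonneg f N) (hBbound N hNm₀')
  constructor
  · exact ⟨B, fun m hm x => le_trans (Mv_le f m x) (hBbound m hm)⟩
  -- edge differences
  · set c' : ℝ := (1 + K) * (2 * B) with hc'def
    have hc'0 : 0 ≤ c' := by positivity
    have claim2 : ∀ m, N ≤ m →
        Dv f m ≤ ((Dv f N + c' * ((4:ℝ) ^ N)⁻¹) * 2 ^ N) * ((2:ℝ) ^ m)⁻¹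
          - c' * ((4:ℝ) ^ m)⁻¹ := by
      intro m hm
      induction m, hm using Nat.le_induction with
      | base =>
        have h2 : (0:ℝ) < 2 ^ N := by positivity
        rw [mul_assoc, mul_inv_cancel₀ (ne_of_gt h2), mul_one]
        linarith
      | succ n hn ih =>
        have hn₀ : m₀ ≤ n := le_trans hNm₀' hn
        have hf1 := hfact (n + 1) (le_trans hn (Nat.le_succ n))
        have ht1 : |β (n + 1)| ≤ 1 := by
          refine hf1.1.trans ?_
          rw [show ((4:ℝ) ^ (n+1))⁻¹ = 1 / 4 ^ (n+1) by ring]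
          rw [div_le_iff₀ (by positivity)]
          have : (1:ℝ) ≤ 4 ^ (n + 1) := by
            have := pow_le_pow_right₀ (by norm_num : (1:ℝ) ≤ 4) (Nat.zero_le (n+1))
            simpa using this
          linarith
        have hstep : Dv f (n + 1) ≤ Dv f n / 2 +
            (|β (n + 1)| + Complex.abs ((2 * (1 - z (n + 1)))⁻¹ - 2⁻¹)) * (2 * Mv f n) := by
          apply Finset.sup'_le
          intro e _
          exact keyStep m₀ z β f hold hu hv n hn₀ ht1 (Dv f n) (Mv f n)
            (Dv_le f n) (Mv_le f n) e
        have herr : (|β (n + 1)| + Complex.abs ((2 * (1 - z (n + 1)))⁻¹ - 2⁻¹)) * (2 * Mv f n)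
            ≤ c' * ((4:ℝ) ^ (n + 1))⁻¹ := by
          have h1 : |β (n + 1)| + Complex.abs ((2 * (1 - z (n + 1)))⁻¹ - 2⁻¹)
              ≤ (1 + K) * ((4:ℝ) ^ (n + 1))⁻¹ := by
            have := hf1.1
            have := hf1.2.1
            have hp : (0:ℝ) ≤ ((4:ℝ) ^ (n+1))⁻¹ := by positivity
            nlinarith
          have h2 : 2 * Mv f n ≤ 2 * B := by linarith [hBbound n hn₀]
          calc (|β (n + 1)| + Complex.abs ((2 * (1 - z (n + 1)))⁻¹ - 2⁻¹)) * (2 * Mv f n)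
              ≤ ((1 + K) * ((4:ℝ) ^ (n + 1))⁻¹) * (2 * B) := by
                apply mul_le_mul h1 h2 (by linarith [Mv_nonneg f n]) (by positivity)
            _ = c' * ((4:ℝ) ^ (n + 1))⁻¹ := by rw [hc'def]; ring
        have h2inv : ((2:ℝ) ^ n)⁻¹ = 2 * ((2:ℝ) ^ (n + 1))⁻¹ := by
          rw [pow_succ]; field_simp
        have h4inv : ((4:ℝ) ^ n)⁻¹ = 4 * ((4:ℝ) ^ (n + 1))⁻¹ := by
          rw [pow_succ]; field_simp
        have := ih
        rw [h2inv, h4inv] at this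
        calc Dv f (n + 1) ≤ Dv f n / 2 +
            (|β (n + 1)| + Complex.abs ((2 * (1 - z (n + 1)))⁻¹ - 2⁻¹)) * (2 * Mv f n) := hstep
          _ ≤ Dv f n / 2 + c' * ((4:ℝ) ^ (n + 1))⁻¹ := by linarith
          _ ≤ _ := by
            have hp : (0:ℝ) ≤ c' * ((4:ℝ) ^ (n + 1))⁻¹ := by positivity
            linarith
    set C : ℝ := max (((Dv f N + c' * ((4:ℝ) ^ N)⁻¹) * 2 ^ N))
        ((Finset.Icc (m₀ + 1) N).sup' ⟨N, by simp [hNm₀]⟩ (fun m => Dv f m * 2 ^ m)) with hCdef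
    refine ⟨C, fun m hm e => ?_⟩
    have hDm : Dv f m ≤ C * ((2:ℝ) ^ m)⁻¹ := by
      rcases le_or_gt m N with h | h
      · have hmem : m ∈ Finset.Icc (m₀ + 1) N := Finset.mem_Icc.mpr ⟨hm, h⟩
        have h1 : Dv f m * 2 ^ m ≤ C :=
          le_trans (Finset.le_sup' (fun m => Dv f m * 2 ^ m) hmem) (le_max_right _ _)
        have h2 : (0:ℝ) < 2 ^ m := by positivity
        calc Dv f m = (Dv f m * 2 ^ m) * ((2:ℝ) ^ m)⁻¹ := by
              rw [mul_assoc, mul_inv_cancel₀ (ne_of_gt h2), mul_one]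
          _ ≤ C * ((2:ℝ) ^ m)⁻¹ := by
              apply mul_le_mul_of_nonneg_right h1 (by positivity)
      · have h1 := claim2 m h.le
        have hp : (0:ℝ) ≤ c' * ((4:ℝ) ^ m)⁻¹ := by positivity
        have h2 : ((Dv f N + c' * ((4:ℝ) ^ N)⁻¹) * 2 ^ N) * ((2:ℝ) ^ m)⁻¹
            ≤ C * ((2:ℝ) ^ m)⁻¹ := by
          apply mul_le_mul_of_nonneg_right (le_max_left _ _) (by positivity)
        linarith
    exact le_trans (Dv_le f m e) hDm
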